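/- arXiv:1208.0772 — 6 statements merged into one kernel-verified Lean document; each statement's English description precedes it below -/
import Mathlib

section
/- For every real s < 0, the Legendre transform of the Bose–Einstein entropy satisfies sup_{n > 0} ( s·n − (n·log n − (n+1)·log(n+1)) ) = −log(1 − exp(s)), and the supremum is attained at the unique point n* = 1/(exp(−s) − 1). -/
/-!
Adding `log (1 - e^s)` to `s n - h(n)` and regrouping the logarithms gives
`n log (e^s (n+1) / n) + log ((1 - e^s)(n+1))`. Each of the two terms has the form `a log (b / a)`
with `b - a` summing to zero, so Gibbs' inequality `a log (b / a) ≤ b - a` bounds the sum by `0`,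
with equality exactly when `n = e^s (n+1)`. Up to the factor `n + 1`, the gap is the
Kullback–Leibler divergence between the Bernoulli laws of parameters `n / (n+1)` and `e^s`.
-/

open Real InformationTheory

noncomputable def boseEinsteinEntropy (n : ℝ) : ℝ :=
  n * log n - (n + 1) * log (n + 1)

lemma sub_sub_mul_log_div_eq_mul_klFun {a b : ℝ} (hb : b ≠ 0) :
    b - a - a * log (b / a) = b * klFun (a / b) := by
  rw [klFun_apply, ← inv_div, log_inv]
  field_simp
  ring

section BoseEinstein

variable {s n : ℝ}

lemma neg_log_one_sub_exp_sub_eq (hs : s < 0) (hn : 0 < n) :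
    -log (1 - exp s) - (s * n - boseEinsteinEntropy n)
      = exp s * (n + 1) * klFun (n / (exp s * (n + 1)))
        + (1 - exp s) * (n + 1) * klFun (1 / ((1 - exp s) * (n + 1))) := by
  have hE : 0 < 1 - exp s := sub_pos.2 (exp_lt_one_iff.2 hs)
  rw [← sub_sub_mul_log_div_eq_mul_klFun (by positivity),
    ← sub_sub_mul_log_div_eq_mul_klFun (by positivity), div_one,
    log_div (by positivity) hn.ne', log_mul (by positivity) (by positivity), log_exp,
    log_mul hE.ne' (by positivity), boseEinsteinEntropy]
  ring

lemma sub_boseEinsteinEntropy_le (hs : s < 0) (hn : 0 < n) :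
    s * n - boseEinsteinEntropy n ≤ -log (1 - exp s) := by
  have hE : 0 < 1 - exp s := sub_pos.2 (exp_lt_one_iff.2 hs)
  rw [← sub_nonneg, neg_log_one_sub_exp_sub_eq hs hn]
  exact add_nonneg (mul_nonneg (by positivity) (klFun_nonneg (by positivity)))
    (mul_nonneg (by positivity) (klFun_nonneg (by positivity)))

lemma sub_boseEinsteinEntropy_eq_iff (hs : s < 0) (hn : 0 < n) :
    s * n - boseEinsteinEntropy n = -log (1 - exp s) ↔ n = exp s * (n + 1) := by
  have hE : 0 < 1 - exp s := sub_pos.2 (exp_lt_one_iff.2 hs)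
  rw [eq_comm, ← sub_eq_zero, neg_log_one_sub_exp_sub_eq hs hn,
    add_eq_zero_iff_of_nonneg (mul_nonneg (by positivity) (klFun_nonneg (by positivity)))
      (mul_nonneg (by positivity) (klFun_nonneg (by positivity)))]
  constructor
  · rintro ⟨h, -⟩
    rwa [mul_eq_zero, or_iff_right (by positivity), klFun_eq_zero_iff (by positivity),
      div_eq_one_iff_eq (by positivity)] at h
  · intro h
    have h' : (1 - exp s) * (n + 1) = 1 := by linear_combination h
    rw [← h, h', div_self hn.ne', div_one, klFun_one]
    simp

lemma eq_one_div_exp_neg_sub_one_iff (hs : s < 0) :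
    n = 1 / (exp (-s) - 1) ↔ n = exp s * (n + 1) := by
  have hpos : 0 < exp (-s) - 1 := sub_pos.2 (one_lt_exp_iff.2 (neg_pos.2 hs))
  rw [eq_div_iff hpos.ne', exp_neg]
  field_simp
  constructor <;> intro h <;> linarith

end BoseEinstein

/-- For every `s < 0`, the Legendre transform of the Bose–Einstein entropy
`h(n) = n·log n − (n+1)·log(n+1)` satisfies
`sup_{n > 0} (s·n − h(n)) = −log(1 − exp s)`, the supremum being attained exactly at the
unique point `n* = 1/(exp(−s) − 1)`. -/
theorem legendre_transform_boseEinstein_entropy (s : ℝ) (hs : s < 0) :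
    IsGreatest
      {y : ℝ | ∃ n : ℝ, 0 < n ∧
        y = s * n - (n * Real.log n - (n + 1) * Real.log (n + 1))}
      (-Real.log (1 - Real.exp s)) ∧
    ∀ n : ℝ, 0 < n →
      (s * n - (n * Real.log n - (n + 1) * Real.log (n + 1))
          = -Real.log (1 - Real.exp s)
        ↔ n = 1 / (Real.exp (-s) - 1)) := by
  have hcrit : ∀ n : ℝ, 0 < n →
      (s * n - boseEinsteinEntropy n = -log (1 - exp s) ↔ n = 1 / (exp (-s) - 1)) :=
    fun n hn =>
      (sub_boseEinsteinEntropy_eq_iff hs hn).trans (eq_one_div_exp_neg_sub_one_iff hs).symm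
  have hpos : 0 < 1 / (exp (-s) - 1) :=
    one_div_pos.2 (sub_pos.2 (one_lt_exp_iff.2 (neg_pos.2 hs)))
  refine ⟨⟨⟨_, hpos, ((hcrit _ hpos).2 rfl).symm⟩, ?_⟩, hcrit⟩
  rintro y ⟨n, hn, rfl⟩
  exact sub_boseEinsteinEntropy_le hs hn
end

section
/- Let n ∈ ℝ³ be a unit vector and let f : ℝ → ℝ be continuous. Then for all vectors u, v, w ∈ ℝ³, ∫_{S²} (Ω·u)(Ω·v)(Ω·w) f(Ω·n) dσ(Ω) = a·[(u·v)(n·w) + (u·w)(n·v) + (v·w)(n·u)] + b·(n·u)(n·v)(n·w), where a = (1/2)∫_{S²} ((Ω·n) − (Ω·n)³) f(Ω·n) dσ(Ω) and b = (1/2)∫_{S²} (5(Ω·n)³ − 3(Ω·n)) f(Ω·n) dσ(Ω). (This is the representation of the third-moment tensor Q^{M₁} = (3cE/2)[(χ₁−χ₃)(Id ∨ n) + (5χ₃−3χ₁) n^{∨3}] in terms of the Eddington factors χ₁, χ₃.) -/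
/-!
The moment `T(u, v, w) = ∫ (Ω·u)(Ω·v)(Ω·w) f(Ω·n) dσ` is a symmetric trilinear form that is
invariant under every linear isometry fixing `n`. The reflection through the axis `ℝ n` negates
`n⊥`, so `T(n, n, x) = 0` and `T(x, y, z) = 0` for `x, y, z ⊥ n`. The reflection exchanging two
vectors of `n⊥` of equal length shows that `T(n, x, x) = c ‖x‖²` on `n⊥`, hence
`T(n, x, y) = c ⟪x, y⟫` by polarization. Expanding `u, v, w` along `ℝ n ⊕ n⊥` gives the identity
with coefficients `c` and `T(n, n, n) - 3c`, and Parseval's identity in an orthonormal basis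
`n, b₁, …, b_d` gives `∫ ((Ω·n) - (Ω·n)³) f(Ω·n) dσ = d c`; for `d = 2` the two coefficients are
the `a` and `b` of the statement.
-/

open MeasureTheory Metric Set RealInnerProductSpace
open scoped Pointwise

theorem smul_preimage_eq_preimage_smul {R M N F : Type*} [SMul R M] [SMul R N] [EquivLike F M N]
    [MulActionHomClass F R M N] (e : F) (I : Set R) (A : Set N) :
    I • (e ⁻¹' A) = e ⁻¹' (I • A) := by
  ext x
  simp only [Set.mem_smul, mem_preimage]
  constructor
  · rintro ⟨r, hr, y, hy, rfl⟩
    exact ⟨r, hr, e y, hy, (map_smul e r y).symm⟩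
  · rintro ⟨r, hr, a, ha, h⟩
    obtain ⟨y, rfl⟩ := EquivLike.surjective e a
    exact ⟨r, hr, y, ha, EquivLike.injective e (by rw [map_smul, h])⟩

theorem Continuous.integrable_of_compactSpace {X : Type*} [TopologicalSpace X] [CompactSpace X]
    [MeasurableSpace X] [OpensMeasurableSpace X] {μ : Measure X} [IsFiniteMeasureOnCompacts μ]
    {g : X → ℝ} (hg : Continuous g) : Integrable g μ :=
  hg.integrable_of_hasCompactSupport (.of_compactSpace g)

theorem exists_orthonormalBasis_apply_zero_eq {E : Type*} [NormedAddCommGroup E]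
    [InnerProductSpace ℝ E] [FiniteDimensional ℝ E] {d : ℕ} (hd : Module.finrank ℝ E = d + 1)
    {n : E} (hn : ‖n‖ = 1) : ∃ b : OrthonormalBasis (Fin (d + 1)) ℝ E, b 0 = n := by
  have hv : Orthonormal ℝ (({0} : Set (Fin (d + 1))).domRestrict fun _ => n) :=
    ⟨fun _ => hn, fun ⟨i, hi⟩ ⟨j, hj⟩ hij => (hij (Subtype.ext (hi.trans hj.symm))).elim⟩
  obtain ⟨b, hb⟩ := hv.exists_orthonormalBasis_extension_of_card_eq (by rw [hd, Fintype.card_fin])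
  exact ⟨b, hb 0 rfl⟩

theorem Submodule.reflection_span_singleton_of_inner_eq_zero {E : Type*} [NormedAddCommGroup E]
    [InnerProductSpace ℝ E] {n v : E} (hv : ⟪n, v⟫ = 0) : (ℝ ∙ n).reflection v = -v :=
  reflection_mem_subspace_orthogonalComplement_eq_neg
    (mem_orthogonal_singleton_iff_inner_right.2 hv)

namespace LinearIsometryEquiv

variable {E : Type*} [NormedAddCommGroup E] [NormedSpace ℝ E]

def unitSphereHomeomorph (e : E ≃ₗᵢ[ℝ] E) : sphere (0 : E) 1 ≃ₜ sphere (0 : E) 1 :=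
  e.toHomeomorph.subtype fun x => by simp

@[simp]
theorem coe_unitSphereHomeomorph_apply (e : E ≃ₗᵢ[ℝ] E) (x : sphere (0 : E) 1) :
    (e.unitSphereHomeomorph x : E) = e x := rfl

theorem image_coe_preimage_unitSphereHomeomorph (e : E ≃ₗᵢ[ℝ] E) (s : Set (sphere (0 : E) 1)) :
    ((↑) : sphere (0 : E) 1 → E) '' (e.unitSphereHomeomorph ⁻¹' s) = e ⁻¹' ((↑) '' s) := by
  ext x
  constructor
  · rintro ⟨y, hy, rfl⟩
    exact ⟨_, hy, rfl⟩
  · rintro ⟨y, hy, hyx⟩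
    have hx : x ∈ sphere (0 : E) 1 := by
      rw [mem_sphere_zero_iff_norm, ← e.norm_map, ← hyx]
      exact mem_sphere_zero_iff_norm.1 y.2
    refine ⟨⟨x, hx⟩, ?_, rfl⟩
    rwa [mem_preimage, show e.unitSphereHomeomorph ⟨x, hx⟩ = y from Subtype.ext hyx.symm]

theorem measurePreserving_unitSphereHomeomorph [MeasurableSpace E] [BorelSpace E]
    {μ : Measure E} (e : E ≃ₗᵢ[ℝ] E) (he : MeasurePreserving e μ μ) :
    MeasurePreserving e.unitSphereHomeomorph μ.toSphere μ.toSphere := by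
  refine ⟨e.unitSphereHomeomorph.measurable, Measure.ext fun s hs => ?_⟩
  rw [Measure.map_apply e.unitSphereHomeomorph.measurable hs, Measure.toSphere_apply' _ hs,
    Measure.toSphere_apply' _ (e.unitSphereHomeomorph.measurable hs),
    image_coe_preimage_unitSphereHomeomorph,
    smul_preimage_eq_preimage_smul,
    he.measure_preimage_emb e.toHomeomorph.measurableEmbedding]

end LinearIsometryEquiv

section ThirdMoment

variable {E : Type*} [NormedAddCommGroup E] [InnerProductSpace ℝ E] [MeasurableSpace E]

def IsOrthogonallyInvariant (σ : Measure (sphere (0 : E) 1)) : Prop :=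
  ∀ e : E ≃ₗᵢ[ℝ] E, MeasurePreserving e.unitSphereHomeomorph σ σ

theorem isOrthogonallyInvariant_volume_toSphere [FiniteDimensional ℝ E] [BorelSpace E] :
    IsOrthogonallyInvariant (volume : Measure E).toSphere := fun e =>
  e.measurePreserving_unitSphereHomeomorph e.measurePreserving

noncomputable def thirdMoment (σ : Measure (sphere (0 : E) 1)) (n : E) (f : C(ℝ, ℝ))
    (u v w : E) : ℝ :=
  ∫ Ω : sphere (0 : E) 1, ⟪(Ω : E), u⟫ * ⟪(Ω : E), v⟫ * ⟪(Ω : E), w⟫ * f ⟪(Ω : E), n⟫ ∂σ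

variable {σ : Measure (sphere (0 : E) 1)} {n : E} {f : C(ℝ, ℝ)}

theorem thirdMoment_comm₁₂ (u v w : E) :
    thirdMoment σ n f u v w = thirdMoment σ n f v u w := by
  simp only [thirdMoment, mul_comm ⟪_, u⟫]

theorem thirdMoment_comm₂₃ (u v w : E) :
    thirdMoment σ n f u v w = thirdMoment σ n f u w v := by
  simp only [thirdMoment, mul_right_comm _ ⟪_, v⟫]

theorem thirdMoment_comm₁₃ (u v w : E) :
    thirdMoment σ n f u v w = thirdMoment σ n f w v u := by
  rw [thirdMoment_comm₁₂, thirdMoment_comm₂₃, thirdMoment_comm₁₂]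

theorem thirdMoment_smul₃ (a : ℝ) (u v w : E) :
    thirdMoment σ n f u v (a • w) = a * thirdMoment σ n f u v w := by
  simp only [thirdMoment, real_inner_smul_right, ← integral_const_mul]
  congr 1 with Ω
  ring

theorem thirdMoment_smul₁ (a : ℝ) (u v w : E) :
    thirdMoment σ n f (a • u) v w = a * thirdMoment σ n f u v w := by
  rw [thirdMoment_comm₁₃, thirdMoment_smul₃, thirdMoment_comm₁₃]

theorem thirdMoment_smul₂ (a : ℝ) (u v w : E) :
    thirdMoment σ n f u (a • v) w = a * thirdMoment σ n f u v w := by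
  rw [thirdMoment_comm₂₃, thirdMoment_smul₃, thirdMoment_comm₂₃]

theorem thirdMoment_neg₃ (u v w : E) :
    thirdMoment σ n f u v (-w) = -thirdMoment σ n f u v w := by
  rw [← neg_one_smul ℝ w, thirdMoment_smul₃, neg_one_mul]

variable [BorelSpace E]

theorem thirdMoment_map {e : E ≃ₗᵢ[ℝ] E} (hσ : MeasurePreserving e.unitSphereHomeomorph σ σ)
    (he : e n = n) (u v w : E) :
    thirdMoment σ n f (e u) (e v) (e w) = thirdMoment σ n f u v w := by
  rw [thirdMoment, ← hσ.integral_comp e.unitSphereHomeomorph.measurableEmbedding]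
  congr 1 with Ω
  have hΩn : ⟪e Ω, n⟫ = ⟪(Ω : E), n⟫ := by rw [← e.inner_map_map Ω n, he]
  simp only [LinearIsometryEquiv.coe_unitSphereHomeomorph_apply,
    LinearIsometryEquiv.inner_map_map, hΩn]

theorem thirdMoment_self_self_eq_zero (hσ : IsOrthogonallyInvariant σ) {x : E}
    (hx : ⟪n, x⟫ = 0) : thirdMoment σ n f n n x = 0 := by
  have hn : (ℝ ∙ n).reflection n = n :=
    Submodule.reflection_mem_subspace_eq_self (Submodule.mem_span_singleton_self n)
  have h := thirdMoment_map (f := f) (hσ _) hn n n x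
  rw [hn, Submodule.reflection_span_singleton_of_inner_eq_zero hx, thirdMoment_neg₃] at h
  linarith

theorem thirdMoment_eq_zero_of_inner_eq_zero (hσ : IsOrthogonallyInvariant σ) {x y z : E}
    (hx : ⟪n, x⟫ = 0) (hy : ⟪n, y⟫ = 0) (hz : ⟪n, z⟫ = 0) : thirdMoment σ n f x y z = 0 := by
  have h := thirdMoment_map (f := f) (hσ _)
    (Submodule.reflection_mem_subspace_eq_self (Submodule.mem_span_singleton_self n)) x y z
  rw [Submodule.reflection_span_singleton_of_inner_eq_zero hx,
    Submodule.reflection_span_singleton_of_inner_eq_zero hy,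
    Submodule.reflection_span_singleton_of_inner_eq_zero hz, ← neg_one_smul ℝ x,
    ← neg_one_smul ℝ y, ← neg_one_smul ℝ z, thirdMoment_smul₁, thirdMoment_smul₂,
    thirdMoment_smul₃] at h
  linarith

theorem thirdMoment_self_eq_of_norm_eq (hσ : IsOrthogonallyInvariant σ) {x y : E}
    (hx : ⟪n, x⟫ = 0) (hy : ⟪n, y⟫ = 0) (hxy : ‖x‖ = ‖y‖) :
    thirdMoment σ n f n x x = thirdMoment σ n f n y y := by
  have hn : (ℝ ∙ (x - y))ᗮ.reflection n = n := Submodule.reflection_mem_subspace_eq_self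
    (Submodule.mem_orthogonal_singleton_iff_inner_right.2 (by
      rw [inner_sub_left, real_inner_comm n x, real_inner_comm n y, hx, hy, sub_zero]))
  have h := thirdMoment_map (f := f) (hσ _) hn n x x
  rwa [hn, Submodule.reflection_sub hxy, eq_comm] at h

variable [FiniteDimensional ℝ E] [IsFiniteMeasure σ]

theorem thirdMoment_add₃ (u v w w' : E) :
    thirdMoment σ n f u v (w + w') = thirdMoment σ n f u v w + thirdMoment σ n f u v w' := by
  rw [thirdMoment, thirdMoment, thirdMoment,
    ← integral_add (Continuous.integrable_of_compactSpace (by fun_prop))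
      (Continuous.integrable_of_compactSpace (by fun_prop))]
  congr 1 with Ω
  rw [inner_add_right]
  ring

theorem thirdMoment_add₁ (u u' v w : E) :
    thirdMoment σ n f (u + u') v w = thirdMoment σ n f u v w + thirdMoment σ n f u' v w := by
  rw [thirdMoment_comm₁₃, thirdMoment_add₃, thirdMoment_comm₁₃, thirdMoment_comm₁₃ w]

theorem thirdMoment_add₂ (u v v' w : E) :
    thirdMoment σ n f u (v + v') w = thirdMoment σ n f u v w + thirdMoment σ n f u v' w := by
  rw [thirdMoment_comm₂₃, thirdMoment_add₃, thirdMoment_comm₂₃, thirdMoment_comm₂₃ u w]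

theorem thirdMoment_self_eq_inner_mul (hσ : IsOrthogonallyInvariant σ) {p : E}
    (hp : ⟪n, p⟫ = 0) (hp1 : ‖p‖ = 1) {x y : E} (hx : ⟪n, x⟫ = 0) (hy : ⟪n, y⟫ = 0) :
    thirdMoment σ n f n x y = ⟪x, y⟫ * thirdMoment σ n f n p p := by
  have hsq {z : E} (hz : ⟪n, z⟫ = 0) :
      thirdMoment σ n f n z z = ‖z‖ ^ 2 * thirdMoment σ n f n p p := by
    rw [thirdMoment_self_eq_of_norm_eq hσ hz (y := ‖z‖ • p)
      (by rw [real_inner_smul_right, hp, mul_zero]) (by rw [norm_smul, hp1, norm_norm, mul_one]),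
      thirdMoment_smul₂, thirdMoment_smul₃]
    ring
  have hxy := hsq (z := x + y) (by rw [inner_add_right, hx, hy, add_zero])
  rw [thirdMoment_add₂, thirdMoment_add₃, thirdMoment_add₃, hsq hx, hsq hy,
    thirdMoment_comm₂₃ n y x, norm_add_sq_real] at hxy
  linear_combination hxy / 2

theorem thirdMoment_smul_add_smul_add (hσ : IsOrthogonallyInvariant σ) {p : E}
    (hp : ⟪n, p⟫ = 0) (hp1 : ‖p‖ = 1) {x y z : E} (hx : ⟪n, x⟫ = 0) (hy : ⟪n, y⟫ = 0)
    (hz : ⟪n, z⟫ = 0) (a b c : ℝ) :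
    thirdMoment σ n f (a • n + x) (b • n + y) (c • n + z)
      = a * b * c * thirdMoment σ n f n n n
        + thirdMoment σ n f n p p * (a * ⟪y, z⟫ + b * ⟪x, z⟫ + c * ⟪x, y⟫) := by
  have hnnz := thirdMoment_self_self_eq_zero (f := f) hσ hz
  have hnyn : thirdMoment σ n f n y n = 0 := by
    rw [thirdMoment_comm₂₃, thirdMoment_self_self_eq_zero hσ hy]
  have hxnn : thirdMoment σ n f x n n = 0 := by
    rw [thirdMoment_comm₁₃, thirdMoment_self_self_eq_zero hσ hx]
  have hnyz := thirdMoment_self_eq_inner_mul (f := f) hσ hp hp1 hy hz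
  have hxnz : thirdMoment σ n f x n z = ⟪x, z⟫ * thirdMoment σ n f n p p := by
    rw [thirdMoment_comm₁₂, thirdMoment_self_eq_inner_mul hσ hp hp1 hx hz]
  have hxyn : thirdMoment σ n f x y n = ⟪x, y⟫ * thirdMoment σ n f n p p := by
    rw [thirdMoment_comm₁₃, thirdMoment_comm₂₃, thirdMoment_self_eq_inner_mul hσ hp hp1 hx hy]
  have hxyz := thirdMoment_eq_zero_of_inner_eq_zero (f := f) hσ hx hy hz
  simp only [thirdMoment_add₁, thirdMoment_add₂, thirdMoment_add₃, thirdMoment_smul₁,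
    thirdMoment_smul₂, thirdMoment_smul₃, hnnz, hnyn, hxnn, hnyz, hxnz, hxyn, hxyz]
  ring

theorem thirdMoment_eq_of_norm_eq_one (hσ : IsOrthogonallyInvariant σ) (hn : ‖n‖ = 1)
    {p : E} (hp : ⟪n, p⟫ = 0) (hp1 : ‖p‖ = 1) (u v w : E) :
    thirdMoment σ n f u v w
      = thirdMoment σ n f n p p * (⟪u, v⟫ * ⟪n, w⟫ + ⟪u, w⟫ * ⟪n, v⟫ + ⟪v, w⟫ * ⟪n, u⟫)
        + (thirdMoment σ n f n n n - 3 * thirdMoment σ n f n p p)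
          * (⟪n, u⟫ * ⟪n, v⟫ * ⟪n, w⟫) := by
  have hnn : ⟪n, n⟫ = 1 := by rw [real_inner_self_eq_norm_sq, hn, one_pow]
  have hperp (x : E) : ⟪n, x - ⟪n, x⟫ • n⟫ = 0 := by
    rw [inner_sub_right, real_inner_smul_right, hnn, mul_one, sub_self]
  have hinner (x y : E) : ⟪x, y⟫ = ⟪n, x⟫ * ⟪n, y⟫ + ⟪x - ⟪n, x⟫ • n, y - ⟪n, y⟫ • n⟫ := by
    simp only [inner_sub_left, inner_sub_right, real_inner_smul_left, real_inner_smul_right, hnn,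
      real_inner_comm n]
    ring
  have hsplit := thirdMoment_smul_add_smul_add (f := f) hσ hp hp1 (hperp u) (hperp v) (hperp w)
    ⟪n, u⟫ ⟪n, v⟫ ⟪n, w⟫
  simp only [add_sub_cancel] at hsplit
  rw [hsplit, hinner u v, hinner u w, hinner v w]
  ring

theorem integral_sub_cube_mul_eq_mul_thirdMoment (hσ : IsOrthogonallyInvariant σ) {d : ℕ}
    (b : OrthonormalBasis (Fin (d + 1)) ℝ E) (hb : b 0 = n) {p : E} (hp : ⟪n, p⟫ = 0)
    (hp1 : ‖p‖ = 1) :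
    ∫ Ω : sphere (0 : E) 1, (⟪(Ω : E), n⟫ - ⟪(Ω : E), n⟫ ^ 3) * f ⟪(Ω : E), n⟫ ∂σ
      = d * thirdMoment σ n f n p p := by
  have hbp (i : Fin d) :
      thirdMoment σ n f n (b i.succ) (b i.succ) = thirdMoment σ n f n p p :=
    thirdMoment_self_eq_of_norm_eq hσ (hb ▸ b.orthonormal.2 (Fin.succ_ne_zero i).symm) hp
      (by rw [b.orthonormal.1, hp1])
  have hsum : ∑ i : Fin d, thirdMoment σ n f n (b i.succ) (b i.succ)
      = d * thirdMoment σ n f n p p := by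
    simp [hbp]
  rw [← hsum]
  simp only [thirdMoment]
  rw [← integral_finsetSum _ fun i _ => Continuous.integrable_of_compactSpace (by fun_prop)]
  congr 1 with Ω
  have hParseval := b.sum_sq_inner_left Ω
  rw [Fin.sum_univ_succ, hb, norm_eq_of_mem_sphere Ω] at hParseval
  rw [← Finset.sum_mul]
  simp only [mul_assoc, ← Finset.mul_sum, ← pow_two]
  rw [eq_sub_of_add_eq' hParseval]
  ring

theorem integral_five_cube_sub_three_mul_eq :
    ∫ Ω : sphere (0 : E) 1, (5 * ⟪(Ω : E), n⟫ ^ 3 - 3 * ⟪(Ω : E), n⟫) * f ⟪(Ω : E), n⟫ ∂σ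
      = 2 * thirdMoment σ n f n n n
        - 3 * ∫ Ω : sphere (0 : E) 1, (⟪(Ω : E), n⟫ - ⟪(Ω : E), n⟫ ^ 3) * f ⟪(Ω : E), n⟫ ∂σ := by
  rw [thirdMoment, ← integral_const_mul, ← integral_const_mul,
    ← integral_sub (Continuous.integrable_of_compactSpace (by fun_prop))
      (Continuous.integrable_of_compactSpace (by fun_prop))]
  congr 1 with Ω
  ring

end ThirdMoment

/-- Representation of the third-moment tensor of an axially symmetric angular
distribution: for a unit vector `n` and continuous `f`,
`∫_{S²} (Ω·u)(Ω·v)(Ω·w) f(Ω·n) dσ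
  = a[(u·v)(n·w) + (u·w)(n·v) + (v·w)(n·u)] + b (n·u)(n·v)(n·w)` with
`a = ½∫ ((Ω·n) − (Ω·n)³) f(Ω·n) dσ` and `b = ½∫ (5(Ω·n)³ − 3(Ω·n)) f(Ω·n) dσ`.
This is the representation of `Q^{M₁}` in terms of the Eddington factors `χ₁, χ₃`. -/
theorem sphere_third_moment_axisymmetric
    (σ : Measure (Metric.sphere (0 : EuclideanSpace ℝ (Fin 3)) 1))
    (hσ : σ = (volume : Measure (EuclideanSpace ℝ (Fin 3))).toSphere)
    (n : EuclideanSpace ℝ (Fin 3)) (hn : ‖n‖ = 1)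
    (f : ℝ → ℝ) (hf : Continuous f) :
    ∀ u v w : EuclideanSpace ℝ (Fin 3),
      (∫ Ω : Metric.sphere (0 : EuclideanSpace ℝ (Fin 3)) 1,
          ⟪(Ω : EuclideanSpace ℝ (Fin 3)), u⟫ * ⟪(Ω : EuclideanSpace ℝ (Fin 3)), v⟫ *
            ⟪(Ω : EuclideanSpace ℝ (Fin 3)), w⟫ * f ⟪(Ω : EuclideanSpace ℝ (Fin 3)), n⟫ ∂σ)
        = ((1 / 2) * ∫ Ω : Metric.sphere (0 : EuclideanSpace ℝ (Fin 3)) 1,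
              (⟪(Ω : EuclideanSpace ℝ (Fin 3)), n⟫ -
                ⟪(Ω : EuclideanSpace ℝ (Fin 3)), n⟫ ^ 3) *
                f ⟪(Ω : EuclideanSpace ℝ (Fin 3)), n⟫ ∂σ) *
            (⟪u, v⟫ * ⟪n, w⟫ + ⟪u, w⟫ * ⟪n, v⟫ + ⟪v, w⟫ * ⟪n, u⟫)
          + ((1 / 2) * ∫ Ω : Metric.sphere (0 : EuclideanSpace ℝ (Fin 3)) 1,
              (5 * ⟪(Ω : EuclideanSpace ℝ (Fin 3)), n⟫ ^ 3 -
                3 * ⟪(Ω : EuclideanSpace ℝ (Fin 3)), n⟫) *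
                f ⟪(Ω : EuclideanSpace ℝ (Fin 3)), n⟫ ∂σ) *
            (⟪n, u⟫ * ⟪n, v⟫ * ⟪n, w⟫) := by
  subst hσ
  intro u v w
  obtain ⟨b, hb⟩ := exists_orthonormalBasis_apply_zero_eq (finrank_euclideanSpace_fin (n := 3)) hn
  have hp : ⟪n, b 1⟫ = 0 := hb ▸ b.orthonormal.2 (by decide)
  obtain ⟨F, rfl⟩ : ∃ F : C(ℝ, ℝ), ⇑F = f := ⟨⟨f, hf⟩, rfl⟩
  have hσ := isOrthogonallyInvariant_volume_toSphere (E := EuclideanSpace ℝ (Fin 3))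
  rw [integral_five_cube_sub_three_mul_eq,
    integral_sub_cube_mul_eq_mul_thirdMoment hσ b hb hp (b.orthonormal.1 1)]
  refine (thirdMoment_eq_of_norm_eq_one hσ hn hp (b.orthonormal.1 1) u v w).trans ?_
  push_cast
  ring
end

section
/- For every f ∈ (−1, 1), the quantity γ(f) = −3f/(2 + √(4 − 3f²)) satisfies |γ(f)| < 1 (in particular γ(f)² < 3, so the denominators 3 + γ² and 3 − γ² are nonzero), and the inverse relation f = −4γ(f)/(3 + γ(f)²) holds. Moreover |γ(±1)| = 1. -/
/-! Write `s = √(4 − 3f²)`, so that `γ = −3f/(2 + s)` and `3f² = 4 − s²`. Then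
`(2 + s)² − 9f² = 4(s + 2)(s − 1)`, so `|γ| < 1` exactly when `s > 1`, i.e. when `f² < 1`,
and `|γ| = 1` when `f² = 1`. Substituting `f² = (4 − s²)/3` into `−4γ/(3 + γ²)` gives back `f`. -/

/-- The auxiliary variable `γ(f) = −3f/(2 + √(4 − 3f²))` of the slab-geometry `M₁`
closure. -/
noncomputable def gammaM1 (f : ℝ) : ℝ := -3 * f / (2 + Real.sqrt (4 - 3 * f ^ 2))

namespace GammaM1

variable {f : ℝ}

lemma sq_sqrt_four_sub (hf : 3 * f ^ 2 ≤ 4) : Real.sqrt (4 - 3 * f ^ 2) ^ 2 = 4 - 3 * f ^ 2 :=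
  Real.sq_sqrt (by linarith)

lemma one_lt_sqrt_four_sub (hf : f ^ 2 < 1) : 1 < Real.sqrt (4 - 3 * f ^ 2) :=
  Real.lt_sqrt_of_sq_lt (by linarith)

lemma sq_gammaM1_lt_one (hf : f ^ 2 < 1) : gammaM1 f ^ 2 < 1 := by
  have hs := one_lt_sqrt_four_sub hf
  have hs_sq := sq_sqrt_four_sub (f := f) (by linarith)
  rw [gammaM1, div_pow, div_lt_one (by positivity)]
  nlinarith

lemma abs_gammaM1_lt_one (hf : f ^ 2 < 1) : |gammaM1 f| < 1 :=
  abs_lt_of_sq_lt_sq (by simpa using sq_gammaM1_lt_one hf) zero_le_one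

lemma abs_gammaM1_eq_one (hf : f ^ 2 = 1) : |gammaM1 f| = 1 := by
  have hs : Real.sqrt (4 - 3 * f ^ 2) = 1 := by norm_num [hf]
  have hf_abs : |f| = 1 := by simpa using (sq_eq_sq_iff_abs_eq_abs f 1).1 (by simpa using hf)
  rw [gammaM1, hs, abs_div, abs_mul, hf_abs]
  norm_num

lemma eq_neg_four_mul_gammaM1_div (hf : 3 * f ^ 2 ≤ 4) :
    f = -4 * gammaM1 f / (3 + gammaM1 f ^ 2) := by
  have hs_sq := sq_sqrt_four_sub hf
  have hs := Real.sqrt_nonneg (4 - 3 * f ^ 2)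
  rw [gammaM1]
  generalize Real.sqrt (4 - 3 * f ^ 2) = s at hs_sq hs ⊢
  have hden : (2 + s) ^ 2 ≠ 0 := by positivity
  field_simp
  linear_combination f * hs_sq

end GammaM1

open GammaM1 in
/-- For every `f ∈ (−1, 1)`, `|γ(f)| < 1` (in particular `γ(f)² < 3`), and the inverse
relation `f = −4γ(f)/(3 + γ(f)²)` holds.  Moreover `|γ(±1)| = 1`. -/
theorem gammaM1_properties :
    (∀ f : ℝ, f ∈ Set.Ioo (-1 : ℝ) 1 →
      |gammaM1 f| < 1 ∧ (gammaM1 f) ^ 2 < 3 ∧ f = -4 * gammaM1 f / (3 + (gammaM1 f) ^ 2)) ∧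
    |gammaM1 1| = 1 ∧ |gammaM1 (-1)| = 1 := by
  refine ⟨fun f hf => ?_, abs_gammaM1_eq_one (by norm_num), abs_gammaM1_eq_one (by norm_num)⟩
  have hf_sq : f ^ 2 < 1 := (sq_lt_one_iff_abs_lt_one f).2 (abs_lt.2 hf)
  refine ⟨abs_gammaM1_lt_one hf_sq, ?_, eq_neg_four_mul_gammaM1_div (by linarith)⟩
  linarith [sq_gammaM1_lt_one hf_sq]
end

section
/- Define, for f ∈ (−1, 1), γ(f) = −3f/(2 + √(4 − 3f²)), χ(f) = (1 + 3γ(f)²)/(3 + γ(f)²) and η(f) = 8γ(f)²/(3(3 − γ(f)²)). Then χ is differentiable on (−1, 1) and the identity η(f) = 1/3 + f·χ'(f) − χ(f) holds for every f ∈ (−1, 1). -/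
/-- The Eddington factor `χ(f) = (1 + 3γ(f)²)/(3 + γ(f)²)`. -/
noncomputable def chiM1 (f : ℝ) : ℝ := (1 + 3 * (gammaM1 f) ^ 2) / (3 + (gammaM1 f) ^ 2)

/-- The convective correction coefficient `η(f) = 8γ(f)²/(3(3 − γ(f)²))`. -/
noncomputable def etaM1 (f : ℝ) : ℝ := 8 * (gammaM1 f) ^ 2 / (3 * (3 - (gammaM1 f) ^ 2))

/-!
Everything is a rational function of `s = √(4 − 3f²)`: since `9f² = 3(2 − s)(2 + s)`, one gets
`γ² = 3(2 − s)/(2 + s)`, hence `χ = (5 − 2s)/3` and `η = 4(2 − s)/(3s)`. The closed form of `χ`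
gives `χ'(f) = 2f/s`, and eliminating `f² = (4 − s²)/3` turns `1/3 + fχ' − χ` into `4(2 − s)/(3s)`.
-/

open Real Topology

theorem gammaM1_sq {f : ℝ} (hf : 3 * f ^ 2 ≤ 4) :
    gammaM1 f ^ 2 = 3 * (2 - √(4 - 3 * f ^ 2)) / (2 + √(4 - 3 * f ^ 2)) := by
  have hs := sq_sqrt (sub_nonneg.mpr hf)
  have hpos : 0 < 2 + √(4 - 3 * f ^ 2) := by positivity
  rw [gammaM1, div_pow, div_eq_div_iff (by positivity) hpos.ne']
  linear_combination (3 * (2 + √(4 - 3 * f ^ 2))) * hs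

theorem chiM1_eq {f : ℝ} (hf : 3 * f ^ 2 ≤ 4) :
    chiM1 f = (5 - 2 * √(4 - 3 * f ^ 2)) / 3 := by
  have hpos : 0 < 2 + √(4 - 3 * f ^ 2) := by positivity
  rw [chiM1, gammaM1_sq hf]
  generalize √(4 - 3 * f ^ 2) = s at hpos ⊢
  field_simp
  ring

theorem etaM1_eq {f : ℝ} (hf : 3 * f ^ 2 < 4) :
    etaM1 f = 4 * (2 - √(4 - 3 * f ^ 2)) / (3 * √(4 - 3 * f ^ 2)) := by
  have hs : 0 < √(4 - 3 * f ^ 2) := sqrt_pos.mpr (by linarith)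
  rw [etaM1, gammaM1_sq hf.le]
  generalize √(4 - 3 * f ^ 2) = s at hs ⊢
  have h2s : 2 + s ≠ 0 := by positivity
  have hden : 3 - 3 * (2 - s) / (2 + s) = 6 * s / (2 + s) := by field_simp; ring
  rw [hden]
  field_simp
  ring

theorem hasDerivAt_chiM1 {f : ℝ} (hf : 3 * f ^ 2 < 4) :
    HasDerivAt chiM1 (2 * f / √(4 - 3 * f ^ 2)) f := by
  have hs : 0 < √(4 - 3 * f ^ 2) := sqrt_pos.mpr (by linarith)
  have hclosed : HasDerivAt (fun x => (5 - 2 * √(4 - 3 * x ^ 2)) / 3)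
      (2 * f / √(4 - 3 * f ^ 2)) f := by
    have hrad : HasDerivAt (fun x : ℝ => 4 - 3 * x ^ 2) (-(6 * f)) f :=
      (((hasDerivAt_pow 2 f).const_mul 3).const_sub 4).congr_deriv (by push_cast; ring)
    exact ((((hrad.sqrt (by linarith)).const_mul 2).const_sub 5).div_const 3).congr_deriv
      (by field_simp; ring)
  have hnear : ∀ᶠ x in 𝓝 f, 3 * x ^ 2 < (4 : ℝ) :=
    (by fun_prop : Continuous fun x : ℝ => 3 * x ^ 2).continuousAt.eventually_lt
      continuousAt_const hf
  exact hclosed.congr_of_eventuallyEq (hnear.mono fun x hx => chiM1_eq hx.le)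

/-- The Eddington factor `χ` is differentiable on `(−1, 1)` and
`η(f) = 1/3 + f·χ'(f) − χ(f)` for every `f ∈ (−1, 1)`. -/
theorem etaM1_eq_third_add_mul_deriv_chi_sub_chi :
    ∀ f : ℝ, f ∈ Set.Ioo (-1 : ℝ) 1 →
      DifferentiableAt ℝ chiM1 f ∧
      etaM1 f = 1 / 3 + f * deriv chiM1 f - chiM1 f := by
  rintro f ⟨hlo, hhi⟩
  have hf : 3 * f ^ 2 < 4 := by nlinarith
  have hderiv := hasDerivAt_chiM1 hf
  refine ⟨hderiv.differentiableAt, ?_⟩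
  have hs : 0 < √(4 - 3 * f ^ 2) := sqrt_pos.mpr (by linarith)
  have hsq := sq_sqrt (sub_nonneg.mpr hf.le)
  rw [etaM1_eq hf, hderiv.deriv, chiM1_eq hf.le]
  field_simp
  linear_combination (-2) * hsq
end

section
/- Define, for f ∈ (−1, 1), γ(f) = −3f/(2 + √(4 − 3f²)) and χ(f) = (1 + 3γ(f)²)/(3 + γ(f)²). Then χ(f) − f² > 0 for every f ∈ (−1, 1). -/
/-- `χ(f) − f² > 0` for every `f ∈ (−1, 1)`: the first inequality of (eq:chi_ineq) in the
proof of hyperbolicity of the perturbed `M₁` model. -/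
theorem chiM1_sub_sq_pos :
    ∀ f : ℝ, f ∈ Set.Ioo (-1 : ℝ) 1 → 0 < chiM1 f - f ^ 2 := by
  intro f hf
  obtain ⟨h1, h2⟩ := hf
  have hf2 : f ^ 2 < 1 := by nlinarith
  set s := Real.sqrt (4 - 3 * f ^ 2) with hs
  have hsnn : 0 ≤ s := Real.sqrt_nonneg _
  have hs2 : s ^ 2 = 4 - 3 * f ^ 2 := Real.sq_sqrt (by nlinarith)
  have hs1 : 1 ≤ s := by nlinarith [sq_nonneg (s - 1)]
  have hden : (0 : ℝ) < 2 + s := by linarith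
  have hγ : gammaM1 f = -3 * f / (2 + s) := rfl
  have hγden : (0:ℝ) < 3 + (gammaM1 f) ^ 2 := by positivity
  have key : chiM1 f - f ^ 2 = (2 + s * (1 - 3 * f ^ 2)) / (3 * (2 + s)) := by
    rw [chiM1, hγ]
    field_simp
    nlinarith [sq_nonneg s, sq_nonneg f]
  rw [key]
  apply div_pos _ (by linarith)
  nlinarith [sq_nonneg f, mul_pos hden hden, sq_nonneg (f * s)]
end

section
/- Let c > 0 and let E, F, P, C be real numbers such that |F| ≤ cE and cP ≤ cE, cP ≥ 2F − cE, cP ≥ −2F − cE (i.e. (cE, F, cP) satisfies the slab-geometry realizability conditions (C1)–(C2)). Define the control parameter δ ∈ [0, 1] by: δ = min{ (E − P)/C , 1 } if C > 0; δ = min{ (−2F + cE + cP)/(c|C|) , (2F + cE + cP)/(c|C|) , 1 } if C < 0; and δ = 1 if C = 0. Then the modified pressure Π_δ = P + δ·C again satisfies cΠ_δ ≤ cE, cΠ_δ ≥ 2F − cE and cΠ_δ ≥ −2F − cE; equivalently Π_δ ≤ E and |F ± cΠ_δ| ≤ cE ± F. -/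
/-- Lemma (pressure): the control parameter `δ ∈ [0,1]` of the perturbed `M₁` scheme
guarantees the realizability conditions (C1)–(C2) for the modified pressure
`Π_δ = P + δ·C`, provided the unperturbed pressure `P` satisfies them. -/
theorem controlled_pressure_satisfies_C1_C2
    (c E F P C : ℝ) (hc : 0 < c)
    (hEF : |F| ≤ c * E)
    (hC1 : c * P ≤ c * E)
    (hC2a : 2 * F - c * E ≤ c * P)
    (hC2b : -2 * F - c * E ≤ c * P)
    (δ : ℝ)
    (hδ : δ = if 0 < C then min ((E - P) / C) 1
          else if C < 0 then
            min (min ((-2 * F + c * E + c * P) / (c * |C|))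
                 ((2 * F + c * E + c * P) / (c * |C|))) 1
          else 1) :
    0 ≤ δ ∧ δ ≤ 1 ∧
    c * (P + δ * C) ≤ c * E ∧
    2 * F - c * E ≤ c * (P + δ * C) ∧
    -2 * F - c * E ≤ c * (P + δ * C) ∧
    P + δ * C ≤ E ∧
    |F + c * (P + δ * C)| ≤ c * E + F ∧
    |F - c * (P + δ * C)| ≤ c * E - F := by
  have hPE : P ≤ E := le_of_mul_le_mul_left hC1 hc
  obtain ⟨hF1, hF2⟩ := abs_le.mp hEF
  have key : 0 ≤ δ ∧ δ ≤ 1 ∧ c * (P + δ * C) ≤ c * E ∧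
      2 * F - c * E ≤ c * (P + δ * C) ∧ -2 * F - c * E ≤ c * (P + δ * C) := by
    rcases lt_trichotomy C 0 with hC | hC | hC
    · have habs : |C| = -C := abs_of_neg hC
      have hcC : 0 < c * |C| := mul_pos hc (abs_pos.mpr hC.ne)
      rw [if_neg (by linarith : ¬ 0 < C), if_pos hC] at hδ
      have h0 : 0 ≤ δ := by
        rw [hδ]
        exact le_min (le_min (div_nonneg (by linarith) hcC.le)
          (div_nonneg (by linarith) hcC.le)) zero_le_one
      have h1 : δ ≤ 1 := by rw [hδ]; exact min_le_right _ _
      have ha : δ * (c * |C|) ≤ -2 * F + c * E + c * P :=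
        (le_div_iff₀ hcC).mp (by rw [hδ]; exact le_trans (min_le_left _ _) (min_le_left _ _))
      have hb : δ * (c * |C|) ≤ 2 * F + c * E + c * P :=
        (le_div_iff₀ hcC).mp (by rw [hδ]; exact le_trans (min_le_left _ _) (min_le_right _ _))
      rw [habs] at ha hb
      have hd : 0 ≤ δ * (-C) := mul_nonneg h0 (by linarith)
      exact ⟨h0, h1, by nlinarith, by nlinarith, by nlinarith⟩
    · subst hC
      rw [if_neg (lt_irrefl 0), if_neg (lt_irrefl 0)] at hδ
      subst hδ
      refine ⟨zero_le_one, le_refl 1, by nlinarith, by nlinarith, by nlinarith⟩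
    · rw [if_pos hC] at hδ
      have h0 : 0 ≤ δ := by
        rw [hδ]; exact le_min (div_nonneg (by linarith) hC.le) zero_le_one
      have h1 : δ ≤ 1 := by rw [hδ]; exact min_le_right _ _
      have h2 : δ * C ≤ E - P := by
        have : δ ≤ (E - P) / C := by rw [hδ]; exact min_le_left _ _
        exact (le_div_iff₀ hC).mp this
      have h3 : 0 ≤ δ * C := mul_nonneg h0 hC.le
      exact ⟨h0, h1, by nlinarith, by nlinarith, by nlinarith⟩
  obtain ⟨h0, h1, h2, h3, h4⟩ := key
  refine ⟨h0, h1, h2, h3, h4, le_of_mul_le_mul_left h2 hc, abs_le.mpr ⟨by linarith, by linarith⟩,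
    abs_le.mpr ⟨by linarith, by linarith⟩⟩
end
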